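/- The normal closure of the subgroup φ(F_a) in F_b is all of F_b. -/

import Mathlib

/-- The generating alphabet `X ⊔ Y ⊔ {y} ⊔ {indexed family over ℕ}`.  In the domain
`F_a` the `ℕ`-indexed generators are the `t_n`; in the codomain `F_b` they are the
`z_n`. -/
abbrev ConstrGen (X Y : Type) : Type := X ⊕ Y ⊕ Unit ⊕ ℕ

/-- The distinguished generator `y`. -/
def yGen (X Y : Type) : ConstrGen X Y := Sum.inr (Sum.inr (Sum.inl ()))

/-- The `n`-th `ℕ`-indexed generator (`t_n` in `F_a`, `z_n` in `F_b`). -/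
def nGen (X Y : Type) (n : ℕ) : ConstrGen X Y := Sum.inr (Sum.inr (Sum.inr n))

/-- The homomorphism `φ : F_a → F_b` which fixes each generator in `X ⊔ Y ⊔ {y}`
and sends `t_n ↦ y·z_{n+1}⁻¹·z_n·z_{n+1}`. -/
def constrPhi (X Y : Type) : FreeGroup (ConstrGen X Y) →* FreeGroup (ConstrGen X Y) :=
  FreeGroup.lift fun g => match g with
    | Sum.inl x => FreeGroup.of (Sum.inl x)
    | Sum.inr (Sum.inl w) => FreeGroup.of (Sum.inr (Sum.inl w))
    | Sum.inr (Sum.inr (Sum.inl _)) => FreeGroup.of (yGen X Y)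
    | Sum.inr (Sum.inr (Sum.inr n)) =>
        FreeGroup.of (yGen X Y) * (FreeGroup.of (nGen X Y (n + 1)))⁻¹ *
          FreeGroup.of (nGen X Y n) * FreeGroup.of (nGen X Y (n + 1))

/-! Each generator other than `z_n` is fixed by `φ`, so lies in the normal closure `N`. Since
`y ∈ N`, also `z_{n+1}⁻¹ z_n z_{n+1} = y⁻¹ φ(t_n) ∈ N`, and conjugating back gives `z_n ∈ N`. -/

theorem Subgroup.mem_of_mul_conj_mem {G : Type*} [Group G] {N : Subgroup G} [N.Normal]
    {y a b : G} (hy : y ∈ N) (h : y * a⁻¹ * b * a ∈ N) : b ∈ N := by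
  have hconj : a⁻¹ * b * a ∈ N := by
    simpa only [mul_assoc, inv_mul_cancel_left] using N.mul_mem (N.inv_mem hy) h
  simpa only [mul_assoc, mul_inv_cancel_left, mul_inv_cancel, mul_one] using
    ‹N.Normal›.conj_mem _ hconj a

theorem constrPhi_of_nGen (X Y : Type) (n : ℕ) :
    constrPhi X Y (FreeGroup.of (nGen X Y n)) =
      FreeGroup.of (yGen X Y) * (FreeGroup.of (nGen X Y (n + 1)))⁻¹ *
        FreeGroup.of (nGen X Y n) * FreeGroup.of (nGen X Y (n + 1)) :=
  FreeGroup.lift_apply_of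

theorem of_mem_normalClosure_range_constrPhi (X Y : Type) (g : ConstrGen X Y) :
    FreeGroup.of g ∈
      Subgroup.normalClosure ((constrPhi X Y).range : Set (FreeGroup (ConstrGen X Y))) := by
  set N := Subgroup.normalClosure ((constrPhi X Y).range : Set (FreeGroup (ConstrGen X Y)))
  have mem_of_range : ∀ w, constrPhi X Y w ∈ N := fun w => Subgroup.subset_normalClosure ⟨w, rfl⟩
  have hy : FreeGroup.of (yGen X Y) ∈ N := mem_of_range (.of (yGen X Y))
  rcases g with x | w | ⟨⟩ | n
  · exact mem_of_range (.of (.inl x))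
  · exact mem_of_range (.of (.inr (.inl w)))
  · exact hy
  · exact Subgroup.mem_of_mul_conj_mem hy (constrPhi_of_nGen X Y n ▸ mem_of_range (.of _))

/-- The normal closure of the subgroup `φ(F_a)` in `F_b` is all of `F_b`. -/
theorem normalClosure_range_constrPhi (X Y : Type) :
    Subgroup.normalClosure ((constrPhi X Y).range : Set (FreeGroup (ConstrGen X Y))) = ⊤ := by
  rw [eq_top_iff, ← FreeGroup.closure_range_of, Subgroup.closure_le]
  rintro _ ⟨g, rfl⟩
  exact of_mem_normalClosure_range_constrPhi X Y g
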